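/- Let N ≥ 1 and let u₀ ∈ L¹(ℝ^N) satisfy u₀ ≥ 0, M = ∫_{ℝ^N} u₀(x) dx > 0, and ∫_{ℝ^N} |y|² u₀(y) dy < ∞. Let x_c = (1/M) ∫_{ℝ^N} y u₀(y) dy be the center of mass and 𝒩₂* = ∫_{ℝ^N} |y − x_c|² u₀(y) dy the centered second moment, and let u(x,t) = ∫_{ℝ^N} G_t(x−y) u₀(y) dy. Then there is a constant C > 0 depending only on N such that for all t > 0: sup_{x∈ℝ^N} |u(x,t) − M·G_t(x − x_c)| ≤ C·𝒩₂*·t^{−(N+2)/2} and ∫_{ℝ^N} |u(x,t) − M·G_t(x − x_c)| dx ≤ C·𝒩₂*·t^{−1}. -/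

import Mathlib

open MeasureTheory Real Filter

/-- The Gaussian heat kernel on `ℝ^N`: `G_t(x) = (4πt)^{-N/2} exp(-|x|²/(4t))`. -/
noncomputable def heatKernel (N : ℕ) (t : ℝ) (x : EuclideanSpace ℝ (Fin N)) : ℝ :=
  (4 * π * t) ^ (-(N : ℝ) / 2) * exp (-‖x‖ ^ 2 / (4 * t))

/-- The solution of the heat equation with initial data `u₀`, given by convolution
with the heat kernel: `u(x,t) = ∫ G_t(x-y) u₀(y) dy`. -/
noncomputable def heatSol (N : ℕ) (u₀ : EuclideanSpace ℝ (Fin N) → ℝ)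
    (x : EuclideanSpace ℝ (Fin N)) (t : ℝ) : ℝ :=
  ∫ y, heatKernel N t (x - y) * u₀ y

/-!
Since `∫ u₀(y) (y - x_c) dy = 0`, subtracting `M G_t(x - x_c)` from `u(x,t)` also removes the
first-order term of the Taylor expansion of `y ↦ G_t(x - y)` about `x_c`, leaving
`u(x,t) - M G_t(x - x_c) = ∫ R(x - x_c, y - x_c) u₀(y) dy` with `R` the first-order Taylor
remainder of `G_t`. In integral form, `|R(a, v)| ≤ ‖v‖² ∫₀¹ H(a - s v) ds`, where
`H = G_t (‖w‖²/(4t²) + 1/(2t))` dominates the Hessian of `G_t`. Since `H ≤ (4π)^{-N/2} t^{-(N+2)/2}`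
and `∫ H ≤ 2·2^{N/2}/t` (compare `H` with a wider Gaussian), the sup bound is immediate, and the
L¹ bound follows by Tonelli and translation invariance of Lebesgue measure.
-/

open scoped RealInnerProductSpace

theorem abs_sub_sub_deriv_le_integral {g g' g'' h : ℝ → ℝ}
    (hg : ∀ s, HasDerivAt g (g' s) s) (hg' : ∀ s, HasDerivAt g' (g'' s) s)
    (hg'' : IntervalIntegrable g'' volume 0 1) (hh : IntervalIntegrable h volume 0 1)
    (hle : ∀ s ∈ Set.Ioc (0 : ℝ) 1, |g'' s| ≤ h s) :
    |g 1 - g 0 - g' 0| ≤ ∫ s in (0 : ℝ)..1, h s := by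
  have hg'_int : IntervalIntegrable g' volume 0 1 :=
    (continuous_iff_continuousAt.2 fun s => (hg' s).continuousAt).intervalIntegrable 0 1
  -- integration by parts against `1 - s`: Taylor's formula with integral remainder
  have taylor : ∫ s in (0 : ℝ)..1, (1 - s) * g'' s = g 1 - g 0 - g' 0 := by
    rw [intervalIntegral.integral_mul_deriv_eq_deriv_mul (u := fun s => 1 - s) (u' := fun _ => -1)
      (fun s _ => (hasDerivAt_id' s).const_sub 1) (fun s _ => hg' s) intervalIntegrable_const
      hg'']
    simp only [sub_self, zero_mul, sub_zero, one_mul, neg_mul, intervalIntegral.integral_neg,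
      sub_neg_eq_add, intervalIntegral.integral_eq_sub_of_hasDerivAt (fun s _ => hg s) hg'_int]
    ring
  rw [← taylor, ← Real.norm_eq_abs]
  refine intervalIntegral.norm_integral_le_of_norm_le zero_le_one (.of_forall fun s hs => ?_) hh
  rw [norm_mul, Real.norm_eq_abs, abs_of_nonneg (sub_nonneg.2 hs.2)]
  exact (mul_le_of_le_one_left (abs_nonneg _) (by linarith [hs.1])).trans (hle s hs)

theorem lintegral_enorm_integral_le {α β E : Type*} [MeasurableSpace α] [MeasurableSpace β]
    [NormedAddCommGroup E] [NormedSpace ℝ E] {μ : Measure α} {ν : Measure β} [SFinite μ]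
    [SFinite ν] {f : α → β → E} (hf : AEStronglyMeasurable (Function.uncurry f) (μ.prod ν)) :
    ∫⁻ x, ‖∫ y, f x y ∂ν‖ₑ ∂μ ≤ ∫⁻ y, ∫⁻ x, ‖f x y‖ₑ ∂μ ∂ν :=
  (lintegral_mono fun _ => enorm_integral_le_lintegral_enorm _).trans_eq
    (lintegral_lintegral_swap hf.enorm)

theorem integral_abs_le_of_lintegral_enorm_le {α : Type*} [MeasurableSpace α] {μ : Measure α}
    {f : α → ℝ} {B : ℝ} (hB : 0 ≤ B) (h : ∫⁻ x, ‖f x‖ₑ ∂μ ≤ ENNReal.ofReal B) :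
    ∫ x, |f x| ∂μ ≤ B := by
  refine (le_abs_self _).trans ?_
  rw [← Real.norm_eq_abs]
  refine (norm_integral_le_lintegral_norm _).trans ?_
  simpa only [Real.norm_eq_abs, abs_abs, Real.enorm_eq_ofReal_abs] using
    ENNReal.toReal_le_of_le_ofReal hB h

section Moments

variable {E : Type*} [NormedAddCommGroup E] [MeasurableSpace E] {μ : Measure E} {f : E → ℝ}

theorem integral_smul_sub_center_eq_zero [NormedSpace ℝ E] [CompleteSpace E] (hf : Integrable f μ)
    (hf₁ : Integrable (fun y => f y • y) μ) {M : ℝ} (hM : M = ∫ y, f y ∂μ) (hM₀ : M ≠ 0) {xc : E}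
    (hxc : xc = (1 / M) • ∫ y, f y • y ∂μ) : ∫ y, f y • (y - xc) ∂μ = 0 := by
  simp_rw [smul_sub]
  rw [integral_sub hf₁ (hf.smul_const xc), integral_smul_const, ← hM, hxc, smul_smul,
    mul_one_div_cancel hM₀, one_smul, sub_self]

theorem integrable_smul_self_of_integrable_sq_norm_mul [NormedSpace ℝ E] [BorelSpace E]
    [SecondCountableTopology E] (hf : Integrable f μ)
    (hf₂ : Integrable (fun y => ‖y‖ ^ 2 * f y) μ) : Integrable (fun y => f y • y) μ := by
  refine (hf.norm.add hf₂.norm).mono' (hf.1.smul aestronglyMeasurable_id) (.of_forall fun y => ?_)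
  have : ‖y‖ ≤ 1 + ‖y‖ ^ 2 := by nlinarith [sq_nonneg (‖y‖ - 1)]
  simp only [norm_smul, norm_mul, norm_pow, Real.norm_eq_abs, abs_norm, Pi.add_apply]
  nlinarith [abs_nonneg (f y)]

theorem integrable_sq_norm_sub_mul [OpensMeasurableSpace E] (hf : Integrable f μ)
    (hf₂ : Integrable (fun y => ‖y‖ ^ 2 * f y) μ) (c : E) :
    Integrable (fun y => ‖y - c‖ ^ 2 * f y) μ := by
  refine ((hf₂.norm.const_mul 2).add (hf.norm.const_mul (2 * ‖c‖ ^ 2))).mono'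
    ((by fun_prop : Continuous fun y : E => ‖y - c‖ ^ 2).aestronglyMeasurable.mul hf.1)
    (.of_forall fun y => ?_)
  have : ‖y - c‖ ^ 2 ≤ 2 * ‖y‖ ^ 2 + 2 * ‖c‖ ^ 2 := by
    nlinarith [norm_sub_le y c, norm_nonneg (y - c), sq_nonneg (‖y‖ - ‖c‖)]
  simp only [norm_mul, norm_pow, Real.norm_eq_abs, abs_norm, Pi.add_apply]
  nlinarith [abs_nonneg (f y)]

end Moments

theorem exp_neg_mul_add_half_le_one (ρ : ℝ) : exp (-ρ) * (ρ + 1 / 2) ≤ 1 := by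
  have h := add_one_le_exp ρ
  rw [exp_neg, inv_mul_le_iff₀ (exp_pos ρ)]
  linarith

theorem hasDerivAt_const_sub_smul {E : Type*} [NormedAddCommGroup E] [NormedSpace ℝ E]
    (a v : E) (s : ℝ) : HasDerivAt (fun s : ℝ => a - s • v) (-v) s := by
  simpa using ((hasDerivAt_id' s).smul_const v).const_sub a

section HeatKernel

variable {N : ℕ} {t : ℝ}

local notation "ℝᴺ" => EuclideanSpace ℝ (Fin N)

theorem continuous_heatKernel : Continuous (heatKernel N t) := by
  unfold heatKernel
  fun_prop

theorem heatKernel_nonneg (ht : 0 < t) (x : ℝᴺ) : 0 ≤ heatKernel N t x := by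
  unfold heatKernel
  positivity

theorem heatKernel_le (ht : 0 < t) (x : ℝᴺ) : heatKernel N t x ≤ (4 * π * t) ^ (-(N : ℝ) / 2) :=
  mul_le_of_le_one_right (by positivity)
    (exp_le_one_iff.2 (by rw [neg_div, neg_nonpos]; positivity))

theorem hasDerivAt_heatKernel_sub_smul (a v : ℝᴺ) (s : ℝ) :
    HasDerivAt (fun s : ℝ => heatKernel N t (a - s • v))
      (heatKernel N t (a - s • v) * (⟪a - s • v, v⟫ / (2 * t))) s := by
  have := (((hasDerivAt_const_sub_smul a v s).norm_sq.fun_neg.div_const (4 * t)).exp).const_mul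
    ((4 * π * t) ^ (-(N : ℝ) / 2))
  unfold heatKernel
  refine this.congr_deriv ?_
  rw [inner_neg_right]
  field_simp
  ring

theorem hasDerivAt_heatKernel_sub_smul_mul (a v : ℝᴺ) (s : ℝ) :
    HasDerivAt (fun s : ℝ => heatKernel N t (a - s • v) * (⟪a - s • v, v⟫ / (2 * t)))
      (heatKernel N t (a - s • v) * ((⟪a - s • v, v⟫ / (2 * t)) ^ 2 - ‖v‖ ^ 2 / (2 * t))) s := by
  have := (hasDerivAt_heatKernel_sub_smul (t := t) a v s).fun_mul
    (((hasDerivAt_const_sub_smul a v s).inner ℝ (hasDerivAt_const s v)).div_const (2 * t))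
  refine this.congr_deriv ?_
  rw [inner_zero_right, inner_neg_left, real_inner_self_eq_norm_sq]
  ring

noncomputable def heatHessianBound (N : ℕ) (t : ℝ) (w : EuclideanSpace ℝ (Fin N)) : ℝ :=
  heatKernel N t w * (‖w‖ ^ 2 / (4 * t ^ 2) + 1 / (2 * t))

theorem continuous_heatHessianBound : Continuous (heatHessianBound N t) :=
  continuous_heatKernel.mul (by fun_prop)

theorem heatHessianBound_nonneg (ht : 0 < t) (w : ℝᴺ) : 0 ≤ heatHessianBound N t w :=
  mul_nonneg (heatKernel_nonneg ht w) (by positivity)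

theorem heatHessianBound_eq (w : ℝᴺ) :
    heatHessianBound N t w = (4 * π * t) ^ (-(N : ℝ) / 2) / t *
      (exp (-(‖w‖ ^ 2 / (4 * t))) * (‖w‖ ^ 2 / (4 * t) + 1 / 2)) := by
  rw [heatHessianBound, heatKernel, neg_div]
  by_cases ht : t = 0
  · simp [ht]
  · field_simp

theorem heatHessianBound_le (ht : 0 < t) (w : ℝᴺ) :
    heatHessianBound N t w ≤ (4 * π) ^ (-(N : ℝ) / 2) * t ^ (-((N : ℝ) + 2) / 2) := by
  have hc : (4 * π * t) ^ (-(N : ℝ) / 2) / t =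
      (4 * π) ^ (-(N : ℝ) / 2) * t ^ (-((N : ℝ) + 2) / 2) := by
    rw [mul_rpow (by positivity) ht.le, mul_div_assoc, ← rpow_sub_one ht.ne']
    ring_nf
  rw [heatHessianBound_eq, hc]
  exact mul_le_of_le_one_right (by positivity) (exp_neg_mul_add_half_le_one _)

theorem heatHessianBound_le_gaussian (ht : 0 < t) (w : ℝᴺ) :
    heatHessianBound N t w ≤
      2 * (4 * π * t) ^ (-(N : ℝ) / 2) / t * exp (-(1 / (8 * t)) * ‖w‖ ^ 2) := by
  set ρ := ‖w‖ ^ 2 / (4 * t)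
  -- split `e^{-ρ} = e^{-ρ/2} e^{-ρ/2}` and absorb the polynomial factor into one of them
  have hsplit : exp (-ρ) = exp (-(ρ / 2)) * exp (-(1 / (8 * t)) * ‖w‖ ^ 2) := by
    rw [← exp_add]; congr 1; simp only [ρ]; field_simp; ring
  have hhalf : exp (-(ρ / 2)) * (ρ + 1 / 2) ≤ 2 := by
    have := exp_neg_mul_add_half_le_one (ρ / 2)
    nlinarith [exp_pos (-(ρ / 2))]
  rw [heatHessianBound_eq, hsplit, mul_right_comm _ (exp _), mul_div_assoc 2, mul_comm 2,
    mul_assoc _ 2]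
  gcongr

theorem lintegral_heatHessianBound_le (ht : 0 < t) :
    ∫⁻ w : ℝᴺ, ‖heatHessianBound N t w‖ₑ ≤ ENNReal.ofReal (2 * 2 ^ ((N : ℝ) / 2) / t) := by
  have hgauss : ∫ w : ℝᴺ, exp (-(1 / (8 * t)) * ‖w‖ ^ 2) = (2 * (4 * π * t)) ^ ((N : ℝ) / 2) := by
    rw [GaussianFourier.integral_rexp_neg_mul_sq_norm (by positivity), finrank_euclideanSpace_fin]
    congr 1
    field_simp
    ring
  have hint : Integrable fun w : ℝᴺ => exp (-(1 / (8 * t)) * ‖w‖ ^ 2) :=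
    .of_integral_ne_zero (by rw [hgauss]; positivity)
  calc ∫⁻ w : ℝᴺ, ‖heatHessianBound N t w‖ₑ
      ≤ ∫⁻ w : ℝᴺ, ENNReal.ofReal
          (2 * (4 * π * t) ^ (-(N : ℝ) / 2) / t * exp (-(1 / (8 * t)) * ‖w‖ ^ 2)) := by
        refine lintegral_mono fun w => ?_
        rw [Real.enorm_of_nonneg (heatHessianBound_nonneg ht w)]
        exact ENNReal.ofReal_le_ofReal (heatHessianBound_le_gaussian ht w)
    _ = ENNReal.ofReal (2 * 2 ^ ((N : ℝ) / 2) / t) := by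
        rw [← ofReal_integral_eq_lintegral_ofReal (hint.const_mul _)
          (.of_forall fun w => by positivity), integral_const_mul, hgauss,
          mul_rpow (x := 2) (by norm_num) (by positivity), neg_div,
          rpow_neg (x := 4 * π * t) (by positivity)]
        congr 1
        field_simp

theorem abs_heatKernel_mul_sub_le (ht : 0 < t) (w v : ℝᴺ) :
    |heatKernel N t w * ((⟪w, v⟫ / (2 * t)) ^ 2 - ‖v‖ ^ 2 / (2 * t))| ≤
      ‖v‖ ^ 2 * heatHessianBound N t w := by
  have hcs : (⟪w, v⟫ / (2 * t)) ^ 2 ≤ ‖v‖ ^ 2 * (‖w‖ ^ 2 / (4 * t ^ 2)) := by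
    have := real_inner_mul_inner_self_le w v
    rw [real_inner_self_eq_norm_sq, real_inner_self_eq_norm_sq] at this
    rw [div_pow, mul_pow, mul_div_assoc']
    gcongr
    · linarith
    · norm_num
  have hv : 0 ≤ ‖v‖ ^ 2 / (2 * t) := by positivity
  rw [abs_mul, abs_of_nonneg (heatKernel_nonneg ht w), heatHessianBound, mul_left_comm,
    mul_add, mul_one_div]
  refine mul_le_mul_of_nonneg_left ?_ (heatKernel_nonneg ht w)
  rw [abs_le]
  constructor <;> nlinarith [sq_nonneg (⟪w, v⟫ / (2 * t))]

/-- Taylor remainder of `G_t` at `a` for the increment `-v`, so that `G_t(x - y)` is expanded about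
`x - x_c` with `v = y - x_c`. -/
noncomputable def heatRemainder (N : ℕ) (t : ℝ) (a v : EuclideanSpace ℝ (Fin N)) : ℝ :=
  heatKernel N t (a - v) - heatKernel N t a - heatKernel N t a * (⟪a, v⟫ / (2 * t))

theorem continuous_heatRemainder :
    Continuous fun p : ℝᴺ × ℝᴺ => heatRemainder N t p.1 p.2 := by
  unfold heatRemainder
  have hG := continuous_heatKernel (N := N) (t := t)
  fun_prop

theorem abs_heatRemainder_le_integral (ht : 0 < t) (a v : ℝᴺ) :
    |heatRemainder N t a v| ≤ ‖v‖ ^ 2 * ∫ s in (0 : ℝ)..1, heatHessianBound N t (a - s • v) := by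
  have hH : Continuous fun s : ℝ => heatHessianBound N t (a - s • v) :=
    continuous_heatHessianBound.comp (by fun_prop)
  have hG'' : Continuous fun s : ℝ =>
      heatKernel N t (a - s • v) * ((⟪a - s • v, v⟫ / (2 * t)) ^ 2 - ‖v‖ ^ 2 / (2 * t)) :=
    (continuous_heatKernel.comp (by fun_prop)).mul (by fun_prop)
  rw [← intervalIntegral.integral_const_mul]
  have := abs_sub_sub_deriv_le_integral (hasDerivAt_heatKernel_sub_smul a v)
    (hasDerivAt_heatKernel_sub_smul_mul a v) (hG''.intervalIntegrable 0 1)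
    ((hH.const_mul _).intervalIntegrable 0 1) (fun s _ => abs_heatKernel_mul_sub_le ht _ v)
  simpa [heatRemainder] using this

theorem lintegral_enorm_heatRemainder_le (ht : 0 < t) (v : ℝᴺ) :
    ∫⁻ a : ℝᴺ, ‖heatRemainder N t a v‖ₑ ≤ ENNReal.ofReal (2 * 2 ^ ((N : ℝ) / 2) / t * ‖v‖ ^ 2) := by
  have hH : Continuous fun p : ℝᴺ × ℝ => heatHessianBound N t (p.1 - p.2 • v) :=
    continuous_heatHessianBound.comp (by fun_prop)
  calc ∫⁻ a : ℝᴺ, ‖heatRemainder N t a v‖ₑ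
      ≤ ∫⁻ a : ℝᴺ, ‖‖v‖ ^ 2‖ₑ * ‖∫ s in Set.Ioc (0 : ℝ) 1, heatHessianBound N t (a - s • v)‖ₑ := by
        refine lintegral_mono fun a => ?_
        have := abs_heatRemainder_le_integral ht a v
        rw [intervalIntegral.integral_of_le zero_le_one] at this
        rw [← enorm_mul, Real.enorm_eq_ofReal_abs, Real.enorm_eq_ofReal_abs]
        exact ENNReal.ofReal_le_ofReal (this.trans (le_abs_self _))
    _ = ‖‖v‖ ^ 2‖ₑ * ∫⁻ a : ℝᴺ,
          ‖∫ s in Set.Ioc (0 : ℝ) 1, heatHessianBound N t (a - s • v)‖ₑ :=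
        lintegral_const_mul' _ _ enorm_ne_top
    _ ≤ ‖‖v‖ ^ 2‖ₑ * ∫⁻ s in Set.Ioc (0 : ℝ) 1, ∫⁻ a : ℝᴺ, ‖heatHessianBound N t (a - s • v)‖ₑ := by
        gcongr
        exact lintegral_enorm_integral_le hH.aestronglyMeasurable
    _ = ‖‖v‖ ^ 2‖ₑ * ∫⁻ w : ℝᴺ, ‖heatHessianBound N t w‖ₑ := by
        simp_rw [lintegral_sub_right_eq_self fun w => ‖heatHessianBound N t w‖ₑ]
        simp
    _ ≤ ENNReal.ofReal (‖v‖ ^ 2) * ENNReal.ofReal (2 * 2 ^ ((N : ℝ) / 2) / t) := by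
        rw [Real.enorm_of_nonneg (by positivity)]
        gcongr
        exact lintegral_heatHessianBound_le ht
    _ = ENNReal.ofReal (2 * 2 ^ ((N : ℝ) / 2) / t * ‖v‖ ^ 2) := by
        rw [← ENNReal.ofReal_mul (by positivity), mul_comm]

theorem abs_heatRemainder_le (ht : 0 < t) (a v : ℝᴺ) :
    |heatRemainder N t a v| ≤ (4 * π) ^ (-(N : ℝ) / 2) * t ^ (-((N : ℝ) + 2) / 2) * ‖v‖ ^ 2 := by
  refine (abs_heatRemainder_le_integral ht a v).trans ?_
  rw [mul_comm]
  gcongr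
  calc ∫ s in (0 : ℝ)..1, heatHessianBound N t (a - s • v)
      ≤ ∫ _ in (0 : ℝ)..1, (4 * π) ^ (-(N : ℝ) / 2) * t ^ (-((N : ℝ) + 2) / 2) :=
        intervalIntegral.integral_mono_on zero_le_one
          ((continuous_heatHessianBound.comp (by fun_prop)).intervalIntegrable 0 1)
          intervalIntegrable_const fun s _ => heatHessianBound_le ht _
    _ = (4 * π) ^ (-(N : ℝ) / 2) * t ^ (-((N : ℝ) + 2) / 2) := by simp

end HeatKernel

section HeatSol

variable {N : ℕ} {t : ℝ} {u₀ : EuclideanSpace ℝ (Fin N) → ℝ} {M : ℝ}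
  {xc : EuclideanSpace ℝ (Fin N)}

local notation "ℝᴺ" => EuclideanSpace ℝ (Fin N)

theorem heatSol_sub_eq_integral_heatRemainder (ht : 0 < t) (hu : Integrable u₀)
    (hu₁ : Integrable fun y => u₀ y • y) (hM : M = ∫ y, u₀ y) (hM₀ : M ≠ 0)
    (hxc : xc = (1 / M) • ∫ y, u₀ y • y) (x : ℝᴺ) :
    heatSol N u₀ x t - M * heatKernel N t (x - xc) =
      ∫ y, heatRemainder N t (x - xc) (y - xc) * u₀ y := by
  have hGu : Integrable fun y => heatKernel N t (x - y) * u₀ y :=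
    hu.bdd_mul (continuous_heatKernel.comp (by fun_prop)).aestronglyMeasurable
      (.of_forall fun y => by
        rw [Real.norm_of_nonneg (heatKernel_nonneg ht _)]
        exact heatKernel_le ht _)
  have hu₁' : Integrable fun y => u₀ y • (y - xc) := by
    simpa only [smul_sub] using hu₁.sub' (hu.smul_const xc)
  have hinner : Integrable fun y => ⟪x - xc, u₀ y • (y - xc)⟫ := hu₁'.const_inner _
  have hpt : (fun y => heatRemainder N t (x - xc) (y - xc) * u₀ y) = fun y =>
      heatKernel N t (x - y) * u₀ y - heatKernel N t (x - xc) * u₀ y -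
        heatKernel N t (x - xc) / (2 * t) * ⟪x - xc, u₀ y • (y - xc)⟫ := by
    funext y
    rw [heatRemainder, sub_sub_sub_cancel_right, real_inner_smul_right]
    ring
  rw [hpt, integral_sub (hGu.sub' (hu.const_mul _)) (hinner.const_mul _),
    integral_sub hGu (hu.const_mul _), integral_const_mul, integral_const_mul,
    integral_inner hu₁', integral_smul_sub_center_eq_zero hu hu₁ hM hM₀ hxc, inner_zero_right,
    ← hM, heatSol]
  ring

theorem abs_heatSol_sub_le (ht : 0 < t) (hu : Integrable u₀) (hu₀ : ∀ y, 0 ≤ u₀ y)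
    (hu₂ : Integrable fun y => ‖y‖ ^ 2 * u₀ y) (hM : M = ∫ y, u₀ y) (hM₀ : M ≠ 0)
    (hxc : xc = (1 / M) • ∫ y, u₀ y • y) (x : ℝᴺ) :
    |heatSol N u₀ x t - M * heatKernel N t (x - xc)| ≤
      (4 * π) ^ (-(N : ℝ) / 2) * (∫ y, ‖y - xc‖ ^ 2 * u₀ y) * t ^ (-((N : ℝ) + 2) / 2) := by
  rw [heatSol_sub_eq_integral_heatRemainder ht hu
    (integrable_smul_self_of_integrable_sq_norm_mul hu hu₂) hM hM₀ hxc, ← Real.norm_eq_abs]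
  calc ‖∫ y, heatRemainder N t (x - xc) (y - xc) * u₀ y‖
      ≤ ∫ y, (4 * π) ^ (-(N : ℝ) / 2) * t ^ (-((N : ℝ) + 2) / 2) * (‖y - xc‖ ^ 2 * u₀ y) := by
        refine norm_integral_le_of_norm_le
          ((integrable_sq_norm_sub_mul hu hu₂ xc).const_mul _) (.of_forall fun y => ?_)
        rw [norm_mul, Real.norm_eq_abs, Real.norm_of_nonneg (hu₀ y), ← mul_assoc]
        exact mul_le_mul_of_nonneg_right (abs_heatRemainder_le ht _ _) (hu₀ y)
    _ = (4 * π) ^ (-(N : ℝ) / 2) * (∫ y, ‖y - xc‖ ^ 2 * u₀ y) * t ^ (-((N : ℝ) + 2) / 2) := by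
        rw [integral_const_mul]
        ring

theorem lintegral_enorm_heatSol_sub_le (ht : 0 < t) (hu : Integrable u₀) (hu₀ : ∀ y, 0 ≤ u₀ y)
    (hu₂ : Integrable fun y => ‖y‖ ^ 2 * u₀ y) (hM : M = ∫ y, u₀ y) (hM₀ : M ≠ 0)
    (hxc : xc = (1 / M) • ∫ y, u₀ y • y) :
    ∫⁻ x, ‖heatSol N u₀ x t - M * heatKernel N t (x - xc)‖ₑ ≤
      ENNReal.ofReal (2 * 2 ^ ((N : ℝ) / 2) / t * ∫ y, ‖y - xc‖ ^ 2 * u₀ y) := by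
  have hR : AEStronglyMeasurable
      (Function.uncurry fun x y : ℝᴺ => heatRemainder N t (x - xc) (y - xc) * u₀ y)
      (volume.prod volume) :=
    (continuous_heatRemainder.comp ((continuous_fst.sub continuous_const).prodMk
      (continuous_snd.sub continuous_const))).aestronglyMeasurable.mul hu.1.comp_snd
  calc ∫⁻ x, ‖heatSol N u₀ x t - M * heatKernel N t (x - xc)‖ₑ
      = ∫⁻ x, ‖∫ y, heatRemainder N t (x - xc) (y - xc) * u₀ y‖ₑ := by
        simp_rw [heatSol_sub_eq_integral_heatRemainder ht hu
          (integrable_smul_self_of_integrable_sq_norm_mul hu hu₂) hM hM₀ hxc]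
    _ ≤ ∫⁻ y, ∫⁻ x, ‖heatRemainder N t (x - xc) (y - xc) * u₀ y‖ₑ :=
        lintegral_enorm_integral_le hR
    _ = ∫⁻ y, (∫⁻ a, ‖heatRemainder N t a (y - xc)‖ₑ) * ‖u₀ y‖ₑ := by
        refine lintegral_congr fun y => ?_
        simp_rw [enorm_mul]
        rw [lintegral_mul_const' _ _ enorm_ne_top,
          lintegral_sub_right_eq_self fun a => ‖heatRemainder N t a (y - xc)‖ₑ]
    _ ≤ ∫⁻ y, ENNReal.ofReal (2 * 2 ^ ((N : ℝ) / 2) / t * ‖y - xc‖ ^ 2) * ‖u₀ y‖ₑ := by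
        gcongr with y
        exact lintegral_enorm_heatRemainder_le ht _
    _ = ∫⁻ y, ENNReal.ofReal (2 * 2 ^ ((N : ℝ) / 2) / t * (‖y - xc‖ ^ 2 * u₀ y)) := by
        refine lintegral_congr fun y => ?_
        rw [Real.enorm_of_nonneg (hu₀ y), ← ENNReal.ofReal_mul (by positivity), mul_assoc]
    _ = ENNReal.ofReal (2 * 2 ^ ((N : ℝ) / 2) / t * ∫ y, ‖y - xc‖ ^ 2 * u₀ y) := by
        rw [← integral_const_mul, ofReal_integral_eq_lintegral_ofReal
          ((integrable_sq_norm_sub_mul hu hu₂ xc).const_mul _)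
          (.of_forall fun y => mul_nonneg (by positivity) (mul_nonneg (by positivity) (hu₀ y)))]

theorem integral_abs_heatSol_sub_le (ht : 0 < t) (hu : Integrable u₀) (hu₀ : ∀ y, 0 ≤ u₀ y)
    (hu₂ : Integrable fun y => ‖y‖ ^ 2 * u₀ y) (hM : M = ∫ y, u₀ y) (hM₀ : M ≠ 0)
    (hxc : xc = (1 / M) • ∫ y, u₀ y • y) :
    ∫ x, |heatSol N u₀ x t - M * heatKernel N t (x - xc)| ≤
      2 * 2 ^ ((N : ℝ) / 2) * (∫ y, ‖y - xc‖ ^ 2 * u₀ y) * t ^ (-(1 : ℝ)) := by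
  have hmoment : 0 ≤ ∫ y, ‖y - xc‖ ^ 2 * u₀ y :=
    integral_nonneg fun y => mul_nonneg (sq_nonneg _) (hu₀ y)
  refine (integral_abs_le_of_lintegral_enorm_le (by positivity)
    (lintegral_enorm_heatSol_sub_le ht hu hu₀ hu₂ hM hM₀ hxc)).trans_eq ?_
  rw [rpow_neg_one]
  ring

end HeatSol

theorem heat_convergence_rate_centered_general (N : ℕ) :
    ∃ C : ℝ, 0 < C ∧ ∀ u₀ : EuclideanSpace ℝ (Fin N) → ℝ,
      Integrable u₀ → (∀ y, 0 ≤ u₀ y) →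
      Integrable (fun y => ‖y‖ ^ 2 * u₀ y) →
      ∀ M : ℝ, M = ∫ y, u₀ y → 0 < M →
      ∀ xc : EuclideanSpace ℝ (Fin N),
        xc = (1 / M) • ∫ y : EuclideanSpace ℝ (Fin N), u₀ y • y →
      ∀ t : ℝ, 0 < t →
        (∀ x : EuclideanSpace ℝ (Fin N),
            |heatSol N u₀ x t - M * heatKernel N t (x - xc)| ≤
              C * (∫ y, ‖y - xc‖ ^ 2 * u₀ y) * t ^ (-((N : ℝ) + 2) / 2)) ∧
          (∫ x, |heatSol N u₀ x t - M * heatKernel N t (x - xc)|) ≤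
            C * (∫ y, ‖y - xc‖ ^ 2 * u₀ y) * t ^ (-(1 : ℝ)) := by
  refine ⟨max ((4 * π) ^ (-(N : ℝ) / 2)) (2 * 2 ^ ((N : ℝ) / 2)),
    lt_max_of_lt_right (by positivity), ?_⟩
  intro u₀ hu hu₀ hu₂ M hM hM₀ xc hxc t ht
  have hmoment : 0 ≤ ∫ y, ‖y - xc‖ ^ 2 * u₀ y :=
    integral_nonneg fun y => mul_nonneg (sq_nonneg _) (hu₀ y)
  refine ⟨fun x => (abs_heatSol_sub_le ht hu hu₀ hu₂ hM hM₀.ne' hxc x).trans ?_,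
    (integral_abs_heatSol_sub_le ht hu hu₀ hu₂ hM hM₀.ne' hxc).trans ?_⟩
  · gcongr
    exact le_max_left _ _
  · gcongr
    exact le_max_right _ _

/-- Centered second-moment rates: translating to the center of mass `x_c`,
`|u(x,t) − M·G_t(x−x_c)| ≤ C·𝒩₂*·t^{-(N+2)/2}` and
`‖u(·,t) − M·G_t(·−x_c)‖_{L¹} ≤ C·𝒩₂*·t^{-1}`, with `C = C(N)`. -/
theorem heat_convergence_rate_centered (N : ℕ) (hN : 1 ≤ N) :
    ∃ C : ℝ, 0 < C ∧ ∀ u₀ : EuclideanSpace ℝ (Fin N) → ℝ,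
      Integrable u₀ → (∀ y, 0 ≤ u₀ y) →
      Integrable (fun y => ‖y‖ ^ 2 * u₀ y) →
      ∀ M : ℝ, M = ∫ y, u₀ y → 0 < M →
      ∀ xc : EuclideanSpace ℝ (Fin N),
        xc = (1 / M) • ∫ y : EuclideanSpace ℝ (Fin N), u₀ y • y →
      ∀ t : ℝ, 0 < t →
        (∀ x : EuclideanSpace ℝ (Fin N),
            |heatSol N u₀ x t - M * heatKernel N t (x - xc)| ≤
              C * (∫ y, ‖y - xc‖ ^ 2 * u₀ y) * t ^ (-((N : ℝ) + 2) / 2)) ∧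
          (∫ x, |heatSol N u₀ x t - M * heatKernel N t (x - xc)|) ≤
            C * (∫ y, ‖y - xc‖ ^ 2 * u₀ y) * t ^ (-(1 : ℝ)) :=
  heat_convergence_rate_centered_general N
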